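/- If γ ∈ SL(2,ℤ) with γ ≠ I and γ ≠ −I fixes a point z ∈ ℍ (i.e., γ·z = z), then z is SL(2,ℤ)-equivalent to i or to ω = (−1 + i√3)/2; that is, there exists δ ∈ SL(2,ℤ) with δ·z = i or δ·z = ω. -/

import Mathlib

open UpperHalfPlane
open scoped MatrixGroups
open ModularGroup
open scoped Modular

/-! Move `z` into the fundamental domain `𝒟` by some `g`; the conjugate `g γ g⁻¹ ≠ ±1` fixes
`g • z`, and the only points of `𝒟` with stabilizer larger than `{±1}` are `i`, `ρ` and
`ρ + 1 = T • ρ`. -/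

theorem conj_eq_neg_one_iff {G : Type*} [Group G] [HasDistribNeg G] {g γ : G} :
    g * γ * g⁻¹ = -1 ↔ γ = -1 := by
  rw [mul_inv_eq_iff_eq_mul, neg_one_mul, ← mul_neg_one g, mul_right_inj]

theorem UpperHalfPlane.coe_ρ : (ρ : ℂ) = (-1 + Real.sqrt 3 * Complex.I) / 2 := by
  apply Complex.ext <;> simp [ρ]

/-- Any point of the upper half-plane fixed by an element of `SL(2, ℤ)` other than `±I`
is `SL(2, ℤ)`-equivalent to `i` or to `ω = (−1 + i√3)/2`. -/
theorem elliptic_point_equivalent_to_i_or_omega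
    (γ : SL(2, ℤ)) (hγ1 : γ ≠ 1) (hγ2 : γ ≠ -1)
    (z : ℍ) (hfix : γ • z = z) :
    ∃ δ : SL(2, ℤ),
      ((δ • z : ℍ) : ℂ) = Complex.I ∨
      ((δ • z : ℍ) : ℂ) = (-1 + Real.sqrt 3 * Complex.I) / 2 := by
  obtain ⟨g, hg⟩ := exists_smul_mem_fd z
  have hfix' : (g * γ * g⁻¹) • g • z = g • z := by rw [mul_smul, mul_smul, inv_smul_smul, hfix]
  have hcases : g • z = I ∨ g • z = ρ ∨ g • z = (1 : ℝ) +ᵥ ρ := by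
    by_contra! hne
    obtain h | h := stabilizer_of_ne hg hfix' hne.1 hne.2.1 hne.2.2
    exacts [hγ1 (conj_eq_one_iff.mp h), hγ2 (conj_eq_neg_one_iff.mp h)]
  obtain h | h | h := hcases
  · exact ⟨g, Or.inl (by rw [h, coe_I])⟩
  · exact ⟨g, Or.inr (by rw [h, coe_ρ])⟩
  · refine ⟨T⁻¹ * g, Or.inr ?_⟩
    rw [mul_smul, h, inv_smul_eq_iff.mpr (modular_T_smul ρ).symm, coe_ρ]
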